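/- arXiv:1612.02208 — 5 statements merged into one kernel-verified Lean document; each statement's English description precedes it below -/
import Mathlib

section
/- Peskin's four-point kernel function φ is nonnegative: φ(r) ≥ 0 for all real r. -/
/-- Peskin's four-point regularized delta kernel function. -/
noncomputable def peskinPhi (r : ℝ) : ℝ :=
  if |r| < 1 then (3 - 2 * |r| + Real.sqrt (1 + 4 * |r| - 4 * r ^ 2)) / 8
  else if |r| < 2 then (5 - 2 * |r| - Real.sqrt (-7 + 12 * |r| - 4 * r ^ 2)) / 8
  else 0

theorem peskinPhi_nonneg (r : ℝ) : 0 ≤ peskinPhi r := by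
  unfold peskinPhi
  have h0 : (0:ℝ) ≤ |r| := abs_nonneg r
  split_ifs with h1 h2
  · have : (0:ℝ) ≤ Real.sqrt (1 + 4 * |r| - 4 * r ^ 2) := Real.sqrt_nonneg _
    nlinarith
  · have hle : Real.sqrt (-7 + 12 * |r| - 4 * r ^ 2) ≤ 5 - 2 * |r| := by
      have hsq : -7 + 12 * |r| - 4 * r ^ 2 ≤ (5 - 2 * |r|) ^ 2 := by
        have : r ^ 2 = |r| ^ 2 := (sq_abs r).symm
        nlinarith
      calc Real.sqrt (-7 + 12 * |r| - 4 * r ^ 2)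
          ≤ Real.sqrt ((5 - 2 * |r|) ^ 2) := Real.sqrt_le_sqrt hsq
        _ = abs (5 - 2 * |r|) := Real.sqrt_sq_eq_abs _
        _ = 5 - 2 * |r| := abs_of_nonneg (by linarith)
    linarith
  · exact le_refl 0
end

section
/- Peskin's four-point kernel satisfies the first-moment condition on unit-shifted points: for every real r, Σ_{j ∈ ℤ} (r - j) φ(r - j) = 0, where only the j with |r - j| < 2 contribute. -/
lemma peskinPhi_eq_zero {x : ℝ} (h : 2 ≤ |x|) : peskinPhi x = 0 := by
  rw [peskinPhi, if_neg (by linarith), if_neg (by linarith)]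

lemma peskinPhi_eval1 {s : ℝ} (h0 : 0 ≤ s) (h1 : s < 1) :
    peskinPhi s = (3 - 2 * s + Real.sqrt (1 + 4 * s - 4 * s ^ 2)) / 8 := by
  rw [peskinPhi, abs_of_nonneg h0, if_pos h1]

lemma peskinPhi_eval2 {s : ℝ} (h0 : 0 ≤ s) (h1 : s < 1) :
    peskinPhi (s + 1) = (3 - 2 * s - Real.sqrt (1 + 4 * s - 4 * s ^ 2)) / 8 := by
  have ha : |s + 1| = s + 1 := abs_of_nonneg (by linarith)
  rw [peskinPhi, ha, if_neg (by linarith), if_pos (by linarith)]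
  rw [show -7 + 12 * (s + 1) - 4 * (s + 1) ^ 2 = 1 + 4 * s - 4 * s ^ 2 by ring]
  ring

lemma peskinPhi_eval3 {s : ℝ} (h0 : 0 ≤ s) (h1 : s < 1) :
    peskinPhi (s - 1) = (1 + 2 * s + Real.sqrt (1 + 4 * s - 4 * s ^ 2)) / 8 := by
  have ha : |s - 1| = 1 - s := by rw [abs_of_nonpos (by linarith)]; ring
  rcases eq_or_lt_of_le h0 with h | h
  · rw [← h, show (0:ℝ) - 1 = -1 by norm_num, peskinPhi]
    rw [show |(-1:ℝ)| = 1 by norm_num, if_neg (by norm_num), if_pos (by norm_num)]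
    rw [show -7 + 12 * (1:ℝ) - 4 * (-1 : ℝ) ^ 2 = 1 by ring,
      show (1:ℝ) + 4 * 0 - 4 * (0:ℝ) ^ 2 = 1 by ring, Real.sqrt_one]
    norm_num
  · rw [peskinPhi, ha, if_pos (by linarith)]
    rw [show (1:ℝ) + 4 * (1 - s) - 4 * (s - 1) ^ 2 = 1 + 4 * s - 4 * s ^ 2 by ring]
    ring

lemma peskinPhi_eval4 {s : ℝ} (h0 : 0 ≤ s) (h1 : s < 1) :
    peskinPhi (s - 2) = (1 + 2 * s - Real.sqrt (1 + 4 * s - 4 * s ^ 2)) / 8 := by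
  have ha : |s - 2| = 2 - s := by rw [abs_of_nonpos (by linarith)]; ring
  rcases eq_or_lt_of_le h0 with h | h
  · rw [peskinPhi_eq_zero (by rw [ha]; linarith), ← h]
    rw [show (1:ℝ) + 4 * 0 - 4 * 0 ^ 2 = 1 by ring, Real.sqrt_one]
    norm_num
  · rw [peskinPhi, ha, if_neg (by linarith), if_pos (by linarith)]
    rw [show -7 + 12 * (2 - s) - 4 * (s - 2) ^ 2 = 1 + 4 * s - 4 * s ^ 2 by ring]
    ring

theorem peskinPhi_first_moment (r : ℝ) :
    ∑ᶠ j : ℤ, (r - (j : ℝ)) * peskinPhi (r - (j : ℝ)) = 0 := by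
  set n : ℤ := ⌊r⌋ with hn
  have hfl : (n : ℝ) ≤ r := Int.floor_le r
  have hfu : r < n + 1 := Int.lt_floor_add_one r
  set s : ℝ := r - n with hs
  have hs0 : 0 ≤ s := by simp [hs]; linarith
  have hs1 : s < 1 := by simp [hs]; linarith
  have hsupp : (Function.support fun j : ℤ => (r - (j : ℝ)) * peskinPhi (r - (j : ℝ)))
      ⊆ (({n - 1, n, n + 1, n + 2} : Finset ℤ) : Set ℤ) := by
    intro j hj
    simp only [Function.mem_support] at hj
    have hphi : peskinPhi (r - (j : ℝ)) ≠ 0 := fun h => hj (by rw [h, mul_zero])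
    have habs : |r - (j : ℝ)| < 2 := by
      by_contra hc
      exact hphi (peskinPhi_eq_zero (le_of_not_gt hc))
    rw [abs_lt] at habs
    have h1 : (n : ℝ) - 2 < j := by linarith
    have h2 : (j : ℝ) < n + 3 := by linarith
    have h1' : n - 2 < j := by exact_mod_cast h1
    have h2' : j < n + 3 := by exact_mod_cast h2
    simp only [Finset.coe_insert, Set.mem_insert_iff, Finset.coe_singleton,
      Set.mem_singleton_iff]
    omega
  rw [finsum_eq_finset_sum_of_support_subset _ hsupp]
  have e1 : (n - 1 : ℤ) ∉ ({n, n + 1, n + 2} : Finset ℤ) := by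
    simp only [Finset.mem_insert, Finset.mem_singleton]; omega
  have e2 : (n : ℤ) ∉ ({n + 1, n + 2} : Finset ℤ) := by
    simp only [Finset.mem_insert, Finset.mem_singleton]; omega
  have e3 : (n + 1 : ℤ) ∉ ({n + 2} : Finset ℤ) := by
    simp only [Finset.mem_singleton]; omega
  rw [Finset.sum_insert e1, Finset.sum_insert e2, Finset.sum_insert e3,
    Finset.sum_singleton]
  have c1 : r - ((n - 1 : ℤ) : ℝ) = s + 1 := by push_cast; rw [hs]; ring
  have c2 : r - ((n : ℤ) : ℝ) = s := by rw [hs]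
  have c3 : r - ((n + 1 : ℤ) : ℝ) = s - 1 := by push_cast; rw [hs]; ring
  have c4 : r - ((n + 2 : ℤ) : ℝ) = s - 2 := by push_cast; rw [hs]; ring
  rw [c1, c2, c3, c4, peskinPhi_eval1 hs0 hs1, peskinPhi_eval2 hs0 hs1,
    peskinPhi_eval3 hs0 hs1, peskinPhi_eval4 hs0 hs1]
  ring
end

section
/- Peskin's four-point kernel satisfies the sum-of-squares identity: for every real r, Σ_{j ∈ ℤ} φ(r - j)² = 3/8 (only finitely many terms are nonzero since φ vanishes outside (-2,2)). -/
lemma peskinPhi_zero_of (x : ℝ) (h : 2 ≤ |x|) : peskinPhi x = 0 := by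
  rw [peskinPhi, if_neg (by linarith), if_neg (by linarith)]

lemma peskin_key (t : ℝ) (h0 : 0 ≤ t) (h1 : t < 1) :
    peskinPhi (t+1)^2 + peskinPhi t^2 + peskinPhi (t-1)^2 + peskinPhi (t-2)^2 = 3/8 := by
  rcases h0.eq_or_lt with h | h
  · subst h
    have e1 : peskinPhi (0+1) = 1/4 := by
      rw [peskinPhi]
      norm_num [abs_of_nonneg, Real.sqrt_one]
    have e2 : peskinPhi 0 = 1/2 := by
      rw [peskinPhi]
      norm_num [Real.sqrt_one]
    have e3 : peskinPhi (0-1) = 1/4 := by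
      rw [peskinPhi]
      norm_num [Real.sqrt_one]
    have e4 : peskinPhi (0-2) = 0 := peskinPhi_zero_of _ (by norm_num)
    rw [e1, e2, e3, e4]; norm_num
  · set s := Real.sqrt (1 + 4*t - 4*t^2) with hsdef
    have hs : s^2 = 1 + 4*t - 4*t^2 := Real.sq_sqrt (by nlinarith)
    have e2 : peskinPhi t = (3 - 2*t + s)/8 := by
      have ha : |t| = t := abs_of_nonneg h0
      rw [peskinPhi, if_pos (by rw [ha]; exact h1), ha]
    have e1 : peskinPhi (t+1) = (3 - 2*t - s)/8 := by
      have ha : |t+1| = t+1 := abs_of_nonneg (by linarith)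
      rw [peskinPhi, if_neg (by rw [ha]; linarith), if_pos (by rw [ha]; linarith), ha]
      have : -7 + 12 * (t+1) - 4 * (t+1)^2 = 1 + 4*t - 4*t^2 := by ring
      rw [this, ← hsdef]; ring
    have e3 : peskinPhi (t-1) = (1 + 2*t + s)/8 := by
      have ha : |t-1| = 1-t := by rw [abs_of_nonpos (by linarith)]; ring
      rw [peskinPhi, if_pos (by rw [ha]; linarith), ha]
      have : 1 + 4 * (1-t) - 4 * (t-1)^2 = 1 + 4*t - 4*t^2 := by ring
      rw [this, ← hsdef]; ring
    have e4 : peskinPhi (t-2) = (1 + 2*t - s)/8 := by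
      have ha : |t-2| = 2-t := by rw [abs_of_nonpos (by linarith)]; ring
      rw [peskinPhi, if_neg (by rw [ha]; linarith), if_pos (by rw [ha]; linarith), ha]
      have : -7 + 12 * (2-t) - 4 * (t-2)^2 = 1 + 4*t - 4*t^2 := by ring
      rw [this, ← hsdef]; ring
    rw [e1, e2, e3, e4]
    linear_combination hs/16

theorem peskinPhi_sum_of_squares (r : ℝ) :
    ∑ᶠ j : ℤ, (peskinPhi (r - (j : ℝ))) ^ 2 = 3 / 8 := by
  set n : ℤ := ⌊r⌋ with hn
  set t : ℝ := r - n with ht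
  have ht0 : 0 ≤ t := sub_nonneg.mpr (Int.floor_le r)
  have ht1 : t < 1 := by
    have := Int.lt_floor_add_one r
    simp only [ht]; push_cast; linarith
  have hsub : (Function.support fun j : ℤ => (peskinPhi (r - (j : ℝ)))^2) ⊆
      ↑({n-1, n, n+1, n+2} : Finset ℤ) := by
    intro j hj
    simp only [Function.mem_support, ne_eq] at hj
    have h2 : |r - (j : ℝ)| < 2 := by
      by_contra hc
      push_neg at hc
      exact hj (by rw [peskinPhi_zero_of _ hc]; ring)
    rw [abs_lt] at h2
    have hjr1 : (j : ℝ) < r + 2 := by linarith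
    have hjr2 : r - 2 < (j : ℝ) := by linarith
    have hfl : (n : ℝ) ≤ r := Int.floor_le r
    have hfu : r < (n : ℝ) + 1 := Int.lt_floor_add_one r
    have hl : n - 1 ≤ j := by
      have h' : (n : ℝ) - 2 < j := by linarith
      have : n - 2 < j := by exact_mod_cast h'
      omega
    have hu : j ≤ n + 2 := by
      have : (j : ℝ) < (n : ℝ) + 3 := by linarith
      have := Int.lt_iff_add_one_le.mp (by exact_mod_cast this : j < n + 3)
      omega
    simp only [Finset.coe_insert, Set.mem_insert_iff, Finset.coe_singleton,
      Set.mem_singleton_iff]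
    omega
  rw [finsum_eq_finset_sum_of_support_subset _ hsub]
  have h1 : ((n : ℤ) - 1 : ℤ) ∉ ({n, n+1, n+2} : Finset ℤ) := by simp; omega
  have h2 : (n : ℤ) ∉ ({n+1, n+2} : Finset ℤ) := by simp
  have h3 : ((n : ℤ) + 1 : ℤ) ∉ ({n+2} : Finset ℤ) := by simp
  rw [Finset.sum_insert h1, Finset.sum_insert h2, Finset.sum_insert h3, Finset.sum_singleton]
  have a1 : r - ((n - 1 : ℤ) : ℝ) = t + 1 := by push_cast [ht]; ring
  have a2 : r - ((n : ℤ) : ℝ) = t := by rw [ht]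
  have a3 : r - ((n + 1 : ℤ) : ℝ) = t - 1 := by push_cast [ht]; ring
  have a4 : r - ((n + 2 : ℤ) : ℝ) = t - 2 := by push_cast [ht]; ring
  rw [a1, a2, a3, a4]
  linarith [peskin_key t ht0 ht1]
end

section
/- Peskin's four-point kernel satisfies the even/odd partition property: for every real r, the sum of φ(r - j) over even integers j equals 1/2, and the sum over odd integers j equals 1/2. -/
lemma peskinPhi_of_two_le {x : ℝ} (hx : 2 ≤ |x|) : peskinPhi x = 0 := by
  unfold peskinPhi
  rw [if_neg (by linarith), if_neg (by linarith)]

lemma peskinPhi_key {x : ℝ} (h0 : 0 ≤ x) (h2 : x < 2) :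
    peskinPhi x + peskinPhi (x - 2) = 1 / 2 := by
  have hx : |x| = x := abs_of_nonneg h0
  have hx2 : |x - 2| = 2 - x := by rw [abs_of_nonpos (by linarith)]; ring
  rcases h0.eq_or_lt with h0' | h0'
  · subst h0'
    have : peskinPhi (0 - 2) = 0 := peskinPhi_of_two_le (by rw [hx2]; norm_num)
    rw [this]
    unfold peskinPhi
    rw [if_pos (by rw [hx]; norm_num)]
    norm_num
  rcases lt_trichotomy x 1 with h1 | h1 | h1
  · -- 0 < x < 1
    have harg : -7 + 12 * |x - 2| - 4 * (x - 2) ^ 2 = 1 + 4 * |x| - 4 * x ^ 2 := by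
      rw [hx, hx2]; ring
    unfold peskinPhi
    rw [if_pos (by rw [hx]; exact h1), if_neg (by rw [hx2]; linarith),
      if_pos (by rw [hx2]; linarith), harg, hx, hx2]
    ring
  · -- x = 1
    subst h1
    unfold peskinPhi
    rw [if_neg (by rw [hx]; norm_num), if_pos (by rw [hx]; norm_num),
      if_neg (by rw [hx2]; norm_num), if_pos (by rw [hx2]; norm_num)]
    rw [hx, hx2]
    norm_num
  · -- 1 < x < 2
    have harg : 1 + 4 * |x - 2| - 4 * (x - 2) ^ 2 = -7 + 12 * |x| - 4 * x ^ 2 := by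
      rw [hx, hx2]; ring
    unfold peskinPhi
    rw [if_neg (by rw [hx]; linarith), if_pos (by rw [hx]; linarith),
      if_pos (by rw [hx2]; linarith), harg, hx, hx2]
    ring

lemma peskinPhi_even_sum (r : ℝ) :
    (∑ᶠ j ∈ {j : ℤ | Even j}, peskinPhi (r - (j : ℝ))) = 1 / 2 := by
  set m : ℤ := ⌊r / 2⌋ with hm
  have hm0 : (2 * m : ℝ) ≤ r := by
    have := Int.floor_le (r / 2); rw [← hm] at this; linarith
  have hm2 : r < 2 * m + 2 := by
    have := Int.lt_floor_add_one (r / 2); rw [← hm] at this; linarith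
  have hset : {j : ℤ | Even j} ∩ Function.support (fun j : ℤ => peskinPhi (r - (j : ℝ)))
      = ↑({2 * m, 2 * m + 2} : Finset ℤ) ∩
        Function.support (fun j : ℤ => peskinPhi (r - (j : ℝ))) := by
    ext j
    simp only [Set.mem_inter_iff, Set.mem_setOf_eq, Function.mem_support, Finset.coe_insert,
      Finset.coe_singleton, Set.mem_insert_iff, Set.mem_singleton_iff]
    constructor
    · rintro ⟨⟨k, rfl⟩, hne⟩
      have habs : |r - ((k + k : ℤ) : ℝ)| < 2 := by
        by_contra h
        exact hne (peskinPhi_of_two_le (le_of_not_gt h))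
      rw [abs_lt] at habs
      push_cast at habs
      have hk1 : (k : ℝ) < m + 2 := by linarith
      have hk2 : (m : ℝ) < k + 1 := by linarith
      have hk1' : k < m + 2 := by exact_mod_cast hk1
      have hk2' : m < k + 1 := by exact_mod_cast hk2
      refine ⟨?_, hne⟩
      omega
    · rintro ⟨h, hne⟩
      refine ⟨?_, hne⟩
      rcases h with rfl | rfl
      · exact ⟨m, by ring⟩
      · exact ⟨m + 1, by ring⟩
  rw [finsum_mem_eq_sum_of_inter_support_eq _ hset,
    Finset.sum_pair (by omega : (2 * m : ℤ) ≠ 2 * m + 2)]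
  have := peskinPhi_key (x := r - 2 * m) (by linarith) (by linarith)
  have heq : r - ((2 * m + 2 : ℤ) : ℝ) = (r - 2 * m) - 2 := by push_cast; ring
  have heq2 : r - ((2 * m : ℤ) : ℝ) = r - 2 * m := by push_cast; ring
  rw [heq, heq2]
  exact this

theorem peskinPhi_even_odd_partition (r : ℝ) :
    (∑ᶠ j ∈ {j : ℤ | Even j}, peskinPhi (r - (j : ℝ))) = 1 / 2 ∧
    (∑ᶠ j ∈ {j : ℤ | Odd j}, peskinPhi (r - (j : ℝ))) = 1 / 2 := by
  refine ⟨peskinPhi_even_sum r, ?_⟩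
  have himg : {j : ℤ | Odd j} = (fun j : ℤ => j + 1) '' {j : ℤ | Even j} := by
    ext j
    simp only [Set.mem_setOf_eq, Set.mem_image, Int.odd_iff, Int.even_iff]
    constructor
    · intro h; exact ⟨j - 1, by omega, by omega⟩
    · rintro ⟨x, hx, rfl⟩; omega
  rw [himg, finsum_mem_image (fun a _ b _ h => by omega)]
  rw [finsum_mem_congr rfl (fun j _ => by
    show peskinPhi (r - ((j + 1 : ℤ) : ℝ)) = peskinPhi ((r - 1) - (j : ℝ))
    push_cast; ring_nf)]
  exact peskinPhi_even_sum (r - 1)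
end

section
/- Energy identity for the semi-implicit scheme in the unforced linear Stokes case: if (ρ/Δt)(u^{n+1} - u^n) = μ Δ_h u^{n+1} + S K J u^{n+1}·Δt + S K X^n, with X^{n+1} = X^n + Δt J u^{n+1}, K symmetric negative semidefinite, S = J*, and Δ_h symmetric negative semidefinite, then the discrete energy E^n = (ρ/2)‖u^n‖² - (1/2)⟨K X^n, X^n⟩ satisfies E^{n+1} ≤ E^n. -/
open scoped RealInnerProductSpace

/-- Energy stability of the semi-implicit IB scheme in the unforced linear Stokes case:
if `ρ(u' - u)/Δt = L u' + S K X'` with `X' = X + Δt J u'`, `S = J*`, and `K`, `L`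
symmetric negative semidefinite, then the discrete energy
`E(u,X) = (ρ/2)⟨u,u⟩ - (1/2)⟨K X, X⟩` does not increase. -/
theorem semi_implicit_energy_stability
    {V W : Type*} [NormedAddCommGroup V] [InnerProductSpace ℝ V]
    [NormedAddCommGroup W] [InnerProductSpace ℝ W]
    (J : V →ₗ[ℝ] W) (S : W →ₗ[ℝ] V)
    (hS : ∀ (w : W) (v : V), ⟪S w, v⟫ = ⟪w, J v⟫)
    (K : W →ₗ[ℝ] W) (hKsym : ∀ w w', ⟪K w, w'⟫ = ⟪w, K w'⟫)
    (hKneg : ∀ w : W, ⟪K w, w⟫ ≤ 0)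
    (L : V →ₗ[ℝ] V) (hLsym : ∀ v v', ⟪L v, v'⟫ = ⟪v, L v'⟫)
    (hLneg : ∀ v : V, ⟪L v, v⟫ ≤ 0)
    (ρ Δt : ℝ) (hρ : 0 < ρ) (hΔt : 0 < Δt)
    (u u' : V) (X X' : W)
    (hscheme : (ρ / Δt) • (u' - u) = L u' + S (K X'))
    (hX : X' = X + Δt • J u') :
    (ρ / 2) * ⟪u', u'⟫ - (1 / 2) * ⟪K X', X'⟫
      ≤ (ρ / 2) * ⟪u, u⟫ - (1 / 2) * ⟪K X, X⟫ := by
  have hJu : J u' = (Δt)⁻¹ • (X' - X) := by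
    rw [hX]; simp [smul_smul, inv_mul_cancel₀ hΔt.ne']
  -- inner product of the scheme with u'
  have h1 : (ρ / Δt) * ⟪u' - u, u'⟫
      = ⟪L u', u'⟫ + (Δt)⁻¹ * ⟪K X', X' - X⟫ := by
    have := congrArg (fun v => ⟪v, u'⟫) hscheme
    simpa [real_inner_smul_left, inner_add_left, hS, hJu,
      real_inner_smul_right] using this
  -- algebraic identities
  have h2 : 2 * ⟪u' - u, u'⟫ = ⟪u', u'⟫ - ⟪u, u⟫ + ⟪u' - u, u' - u⟫ := by
    simp only [inner_sub_left, inner_sub_right]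
    rw [real_inner_comm u u']; ring
  have h3 : 2 * ⟪K X', X' - X⟫
      = ⟪K X', X'⟫ - ⟪K X, X⟫ + ⟪K (X' - X), X' - X⟫ := by
    simp only [inner_sub_left, inner_sub_right, map_sub]
    have : ⟪K X, X'⟫ = ⟪K X', X⟫ := by rw [hKsym, real_inner_comm]
    rw [this]; ring
  have hL := hLneg u'
  have hKd := hKneg (X' - X)
  have hu2 : (0:ℝ) ≤ ⟪u' - u, u' - u⟫ := real_inner_self_nonneg
  have h1Δt : ρ * ⟪u' - u, u'⟫ = Δt * ⟪L u', u'⟫ + ⟪K X', X' - X⟫ := by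
    have := congrArg (fun x => Δt * x) h1
    field_simp at this
    linarith [this]
  have E : ρ * (2 * ⟪u' - u, u'⟫) = 2 * (Δt * ⟪L u', u'⟫) + 2 * ⟪K X', X' - X⟫ := by
    nlinarith [h1Δt]
  rw [h2, h3] at E
  have h4 : Δt * ⟪L u', u'⟫ ≤ 0 := mul_nonpos_of_nonneg_of_nonpos hΔt.le hL
  have h5 : 0 ≤ ρ * ⟪u' - u, u' - u⟫ := mul_nonneg hρ.le hu2
  nlinarith [E, h4, h5, hKd]
end
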